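/- arXiv:2604.23286 — 2 statements merged into one kernel-verified Lean document; each statement's English description precedes it below -/
import Mathlib

section
/- For integers a ≥ b ≥ 2 and c ≥ 0, the identity s_{(a,b,1^c)} = s_{(a,1^{c+1})} · s_{(b−1)} − s_{(a)} · s_{(b−1,1^{c+1})} holds in the algebra of symmetric functions. -/
open scoped BigOperators

/-- The complete homogeneous symmetric polynomial `h_k` in `n` variables. -/
noncomputable def hpoly (n k : ℕ) : MvPolynomial (Fin n) ℚ :=
  ∑ m : Sym (Fin n) k, (Sym.toMultiset m).map MvPolynomial.X |>.prod

/-- `h_k` for an integer index, vanishing for negative `k`. -/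
noncomputable def hpolyZ (n : ℕ) (k : ℤ) : MvPolynomial (Fin n) ℚ :=
  if 0 ≤ k then hpoly n k.toNat else 0

/-- The Schur polynomial `s_λ` in `n` variables, via the Jacobi–Trudi identity
`s_λ = det (h_{λ_i - i + j})`. -/
noncomputable def schurPoly (n : ℕ) (lam : List ℕ) : MvPolynomial (Fin n) ℚ :=
  ∑ σ : Equiv.Perm (Fin lam.length),
    (Equiv.Perm.sign σ : ℤ) •
      ∏ i : Fin lam.length, hpolyZ n ((lam.get i : ℤ) - ((i : ℕ) : ℤ) + ((σ i : ℕ) : ℤ))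

/-! In the Jacobi–Trudi matrix `(h_{λ_i - i + j})` of a near-hook `(x, y + 1, 1^c)` the first
column is `(h_x, h_y, 0, …, 0)`, so expanding along it gives `h_x D_y - h_y D_x`, where `D_z` is
the determinant of one fixed shape of minor. The hooks on the right-hand side are the case `y = 0`,
with `h_0 = 1`; substituting, the terms with `D_0` cancel and what is left is
`h_a D_{b-1} - h_{b-1} D_a`. -/

section JacobiTrudi

variable {R : Type*} (H : ℤ → R)

def jacobiTrudiMatrix (m : ℕ) (f : ℕ → ℤ) : Matrix (Fin m) (Fin m) R :=
  Matrix.of fun i j => H (f i + j)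

lemma jacobiTrudiMatrix_submatrix_succAbove_succ {m : ℕ} {f g : ℕ → ℤ} {p : Fin (m + 1)}
    (hfg : ∀ i : Fin m, f (p.succAbove i) + 1 = g i) :
    (jacobiTrudiMatrix H (m + 1) f).submatrix p.succAbove Fin.succ = jacobiTrudiMatrix H m g := by
  ext i j
  simp only [jacobiTrudiMatrix, Matrix.submatrix_apply, Matrix.of_apply, Fin.val_succ, ← hfg i]
  push_cast
  ring_nf

/-- `nearHookRow x y i = λ_i - i` for `λ = (x, y + 1, 1^c)`. -/
def nearHookRow (x y : ℤ) : ℕ → ℤ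
  | 0 => x
  | 1 => y
  | i + 2 => -1 - i

def hookMinorRow (z : ℤ) : ℕ → ℤ
  | 0 => z + 1
  | i + 1 => -i

variable {H}

lemma det_jacobiTrudiMatrix_nearHookRow [CommRing R] (hH : ∀ k < 0, H k = 0) (m : ℕ)
    (x y : ℤ) :
    (jacobiTrudiMatrix H (m + 2) (nearHookRow x y)).det =
      H x * (jacobiTrudiMatrix H (m + 1) (hookMinorRow y)).det -
        H y * (jacobiTrudiMatrix H (m + 1) (hookMinorRow x)).det := by
  rw [Matrix.det_succ_column_zero, Fin.sum_univ_succ, Fin.sum_univ_succ,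
    Finset.sum_eq_zero fun i _ => by simp [jacobiTrudiMatrix, nearHookRow, hH (-1 - i) (by omega)]]
  have minor_zero (i : Fin (m + 1)) :
      nearHookRow x y ((0 : Fin (m + 2)).succAbove i) + 1 = hookMinorRow y i := by
    rcases i with ⟨_ | i, _⟩ <;> simp [nearHookRow, hookMinorRow]
    ring
  have minor_one (i : Fin (m + 1)) :
      nearHookRow x y ((Fin.succ 0 : Fin (m + 2)).succAbove i) + 1 = hookMinorRow x i := by
    induction i using Fin.cases with
    | zero => simp [nearHookRow, hookMinorRow]
    | succ i => simp [nearHookRow, hookMinorRow]; ring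
  rw [jacobiTrudiMatrix_submatrix_succAbove_succ H minor_zero,
    jacobiTrudiMatrix_submatrix_succAbove_succ H minor_one]
  simp [jacobiTrudiMatrix, nearHookRow]
  ring

end JacobiTrudi

lemma hpoly_zero (n : ℕ) : hpoly n 0 = 1 := by
  simp [hpoly, Sym.eq_nil_of_card_zero]

lemma hpolyZ_zero (n : ℕ) : hpolyZ n 0 = 1 := by
  simp [hpolyZ, hpoly_zero]

lemma hpolyZ_of_neg (n : ℕ) {k : ℤ} (hk : k < 0) : hpolyZ n k = 0 := by
  simp [hpolyZ, not_le.mpr hk]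

lemma schurPoly_singleton (n k : ℕ) : schurPoly n [k] = hpolyZ n k := by
  simp [schurPoly]

lemma schurPoly_eq_det_jacobiTrudiMatrix (n : ℕ) {lam : List ℕ} {m : ℕ} (hm : lam.length = m)
    {f : ℕ → ℤ} (hf : ∀ i : Fin lam.length, (lam.get i : ℤ) - i = f i) :
    schurPoly n lam = (jacobiTrudiMatrix (hpolyZ n) m f).det := by
  subst hm
  rw [← Matrix.det_transpose, Matrix.det_apply]
  refine Finset.sum_congr rfl fun σ _ => ?_
  simp [jacobiTrudiMatrix, ← hf, Units.smul_def]

lemma schurPoly_nearHook (n a b c : ℕ) :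
    schurPoly n (a :: b :: List.replicate c 1) =
      (jacobiTrudiMatrix (hpolyZ n) (c + 2) (nearHookRow a (b - 1))).det := by
  refine schurPoly_eq_det_jacobiTrudiMatrix n (by simp) fun i => ?_
  rcases i with ⟨_ | _ | i, _⟩
  · rfl
  · rfl
  · simp [nearHookRow]
    ring

theorem schur_nearHook_giambelli_general (a b c : ℕ) (hb : 2 ≤ b) :
    ∀ n : ℕ,
      schurPoly n (a :: b :: List.replicate c 1) =
        schurPoly n (a :: List.replicate (c + 1) 1) * schurPoly n [b - 1] -
          schurPoly n [a] * schurPoly n ((b - 1) :: List.replicate (c + 1) 1) := by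
  intro n
  have hH : ∀ k < 0, hpolyZ n k = 0 := fun k => hpolyZ_of_neg n
  simp only [List.replicate_succ, schurPoly_nearHook, schurPoly_singleton,
    det_jacobiTrudiMatrix_nearHookRow hH, Nat.cast_one, sub_self, hpolyZ_zero,
    Nat.cast_sub (show 1 ≤ b by omega)]
  ring

/-- for integers `a ≥ b ≥ 2` and `c ≥ 0`, the identity
`s_{(a,b,1^c)} = s_{(a,1^{c+1})} s_{(b-1)} - s_{(a)} s_{(b-1,1^{c+1})}` holds in the algebra
of symmetric functions (equivalently, as symmetric polynomials in any number of variables). -/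
theorem schur_nearHook_giambelli (a b c : ℕ) (hba : b ≤ a) (hb : 2 ≤ b) :
    ∀ n : ℕ,
      schurPoly n (a :: b :: List.replicate c 1) =
        schurPoly n (a :: List.replicate (c + 1) 1) * schurPoly n [b - 1] -
          schurPoly n [a] * schurPoly n ((b - 1) :: List.replicate (c + 1) 1) :=
  schur_nearHook_giambelli_general a b c hb
end

section
/- Let a ≥ 2 be an integer, let b = 2, let c ≥ 1, and let d, e, S be integers with a + b + c = d + e = n, d ≥ e, and 1 ≤ S ≤ ⌊(c+2)/2⌋. Set ν = (a+2, 2^{S−1}, 1^{c+2−2S}). If d < max(a + S, c + 2 − S) or d > a + c + 2 − S, then J^−_d(ν) = ∅, and consequently triple^{(4)}_{(d,e) (a,2,1^c) ν} = 0. -/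
open scoped BigOperators Classical

/-! ### Partitions as weakly decreasing lists of positive integers -/

/-- A partition: a weakly decreasing list of positive integers. -/
def IsPartition (l : List ℕ) : Prop := l.Pairwise (· ≥ ·) ∧ ∀ x ∈ l, 0 < x

/-- `l` is a partition of `n`. -/
def IsPartitionOf (n : ℕ) (l : List ℕ) : Prop := IsPartition l ∧ l.sum = n

/-- The hook partition `(a, 1^c)`. -/
def hookP (a c : ℕ) : List ℕ := a :: List.replicate c 1

/-- The near-hook partition `(a, b, 1^c)`. -/
def nearHookP (a b c : ℕ) : List ℕ := a :: b :: List.replicate c 1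

/-- The (at most) two-row partition `(x, y)`, trailing zeros omitted. -/
def twoRowP (x y : ℕ) : List ℕ := if y = 0 then (if x = 0 then [] else [x]) else [x, y]

/-- The conjugate (transpose) of a partition. -/
def conjP (l : List ℕ) : List ℕ :=
  (List.range (l.getD 0 0)).map fun j => (l.filter fun p => j < p).length

/-- Containment of Young diagrams. -/
def SubP (mu la : List ℕ) : Prop := ∀ i, mu.getD i 0 ≤ la.getD i 0

/-- `kap/eta` is a horizontal strip. -/
def HStrip (eta kap : List ℕ) : Prop :=
  SubP eta kap ∧ ∀ i, kap.getD (i + 1) 0 ≤ eta.getD i 0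

/-! ### Characters of symmetric groups; Kronecker and Littlewood–Richardson coefficients -/

/-- The permutation character of the Young-subgroup permutation module `M^μ`:
`φ^μ(g)` is the number of `g`-invariant functions `Fin n → Fin (length μ)` whose
fiber over `k` has `μ_k` elements. -/
noncomputable def permChar (n : ℕ) (mu : List ℕ) (g : Equiv.Perm (Fin n)) : ℕ :=
  Nat.card {f : Fin n → Fin mu.length //
    (∀ k : Fin mu.length, Nat.card {x : Fin n // f x = k} = mu.get k) ∧ ∀ x, f (g x) = f x}

/-- The irreducible character `χ^λ` of the symmetric group `S_n` indexed by the
partition `λ`, via the determinantal (Jacobi–Trudi) formula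
`χ^λ = ∑_{σ} sgn(σ) φ^{(λ_i - i + σ(i))_i}`, terms with a negative part vanishing. -/
noncomputable def chi (n : ℕ) (lam : List ℕ) (g : Equiv.Perm (Fin n)) : ℤ :=
  ∑ σ : Equiv.Perm (Fin lam.length),
    (Equiv.Perm.sign σ : ℤ) *
      (if ∀ i : Fin lam.length, ((i : ℕ) : ℤ) ≤ (lam.get i : ℤ) + ((σ i : ℕ) : ℤ) then
        (permChar n ((List.finRange lam.length).map fun i => lam.get i + (σ i : ℕ) - (i : ℕ)) g : ℤ)
      else 0)

/-- The Kronecker coefficient `g_{λ μ ν} = (1/n!) ∑_{σ ∈ S_n} χ^λ(σ) χ^μ(σ) χ^ν(σ)`. -/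
noncomputable def kron (n : ℕ) (lam mu nu : List ℕ) : ℚ :=
  (∑ g : Equiv.Perm (Fin n), (chi n lam g : ℚ) * (chi n mu g : ℚ) * (chi n nu g : ℚ)) /
    (n.factorial : ℚ)

/-- The Littlewood–Richardson coefficient `c^λ_{μ ν}`, as the multiplicity
`⟨χ^λ, Ind_{S_m × S_k}^{S_{m+k}} (χ^μ × χ^ν)⟩` computed by Frobenius reciprocity. -/
noncomputable def lrCoeff (lam mu nu : List ℕ) : ℚ :=
  (∑ g : Equiv.Perm (Fin mu.sum), ∑ h : Equiv.Perm (Fin nu.sum),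
      (chi mu.sum mu g : ℚ) * (chi nu.sum nu h : ℚ) *
        (chi (mu.sum + nu.sum) lam (finSumFinEquiv.permCongr (Equiv.sumCongr g h)) : ℚ)) /
    ((mu.sum.factorial : ℚ) * (nu.sum.factorial : ℚ))
/-! ### Indicator functions and the strip count `𝒩` -/

/-- Indicator function of a proposition (integer-valued). -/
noncomputable def ind (P : Prop) : ℤ := if P then 1 else 0

/-- `𝒩_{ν η s1 s2}`: the number of partitions `κ` with `η ⊆ κ ⊆ ν` such that `κ/η` is a
horizontal strip of size `s1` and `ν/κ` is a horizontal strip of size `s2`; by convention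
`0` if `s1 < 0` or `s2 < 0`. -/
noncomputable def NN (nu eta : List ℕ) (s1 s2 : ℤ) : ℕ :=
  if s1 < 0 ∨ s2 < 0 then 0
  else Nat.card {kap : List ℕ // IsPartition kap ∧ HStrip eta kap ∧ HStrip kap nu ∧
    (kap.sum : ℤ) = (eta.sum : ℤ) + s1 ∧ (nu.sum : ℤ) = (kap.sum : ℤ) + s2}

/-! ### Rosas's case data -/

/-- `tail(η) = (η_3, …, η_{ℓ(η)})`. -/
def tailP (l : List ℕ) : List ℕ := l.drop 2

/-- number of 2's in `tail(η)`. -/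
def uP (l : List ℕ) : ℕ := (tailP l).count 2

/-- number of 1's in `tail(η)`. -/
def vP (l : List ℕ) : ℕ := (tailP l).count 1

def n3P (l : List ℕ) : ℕ :=
  if l.length = 1 then 0
  else if l.getD 0 0 - l.getD 1 0 ≤ vP l then l.getD 1 0
  else uP l + 2

def n4P (l : List ℕ) : ℕ :=
  if l.length = 1 then l.getD 0 0
  else if l.getD 0 0 - l.getD 1 0 ≤ vP l then l.getD 0 0
  else uP l + vP l + 2

def d1P (l : List ℕ) : ℕ :=
  if l.length = 1 then 0
  else if l.getD 0 0 - l.getD 1 0 ≤ vP l then vP l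
  else l.getD 0 0 - l.getD 1 0

def d2P (l : List ℕ) : ℕ :=
  if l.length = 1 then 0
  else if l.getD 0 0 - l.getD 1 0 ≤ vP l then uP l
  else l.getD 1 0 - 2

def eP (a c : ℕ) (l : List ℕ) : ℤ :=
  if l.length = 1 then (c : ℤ) + 1
  else if l.getD 0 0 - l.getD 1 0 ≤ vP l then (c : ℤ) + 1
  else (a : ℤ) - 1

noncomputable def Phi (n3 n4 d1 d2 e r : ℤ) : ℤ :=
  ind (n3 ≤ r - d2 - 1 ∧ r - d2 - 1 ≤ n4) * ind (d1 + 2 * d2 < e ∧ e < d1 + 2 * d2 + 3)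
  + ind (n3 ≤ r - d2 ∧ r - d2 ≤ n4) * ind (d1 + 2 * d2 ≤ e ∧ e ≤ d1 + 2 * d2 + 3)
  + ind (n3 ≤ r - d2 + 1 ∧ r - d2 + 1 ≤ n4) * ind (d1 + 2 * d2 < e ∧ e < d1 + 2 * d2 + 3)
  - ind (n3 + d2 + d1 = r) * ind (d1 + 2 * d2 + 1 ≤ e ∧ e ≤ d1 + 2 * d2 + 2)

noncomputable def Psi (c r t N : ℤ) : ℤ :=
  ind (r - 1 ≤ c + 1 ∧ c + 1 ≤ N - r) * ind (c + 1 = t)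
  + ind ((r : ℚ) ≤ ((c : ℚ) + (t : ℚ) + 2) / 2 ∧ ((c : ℚ) + (t : ℚ) + 2) / 2 ≤ (N : ℚ) - (r : ℚ))
      * ind (|c + 1 - t| ≤ 1)

/-- Double hooks: partitions with `ℓ(λ) ≤ 2`, or `ℓ(λ) ≥ 3` and `λ_3 ≤ 2`. -/
def IsDHl (l : List ℕ) : Prop := l.length ≤ 2 ∨ (3 ≤ l.length ∧ l.getD 2 0 ≤ 2)

/-- Rosas's function `Ξ^{[a]}_η(r, c)`, for `η` a partition of `N = η.sum`. -/
noncomputable def Xi (a : ℕ) (eta : List ℕ) (r c : ℕ) : ℤ :=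
  if r = 0 then ind (eta = hookP a (c + 1))
  else if eta = [eta.sum] then ind (c = 0) * ind (r = 1)
  else if eta = List.replicate eta.sum 1 then ind (eta = conjP (twoRowP (eta.sum - r) r))
  else if 2 ≤ eta.getD 0 0 ∧ 2 ≤ eta.length ∧
      eta = eta.getD 0 0 :: List.replicate (eta.length - 1) 1 then
    Psi (c : ℤ) (r : ℤ) ((eta.length : ℤ) - 1) (eta.sum : ℤ)
  else if IsDHl eta ∧ 2 ≤ eta.length ∧ 2 ≤ eta.getD 1 0 then
    Phi (n3P eta) (n4P eta) (d1P eta) (d2P eta) (eP a c eta) (r : ℤ)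
  else 0
/-! ### Index sets and triple sums.  Throughout, `n = a + b + c`, `N = n - b + 1 = a + c + 1`,
`M = n - a = b + c`. -/

/-- The index set `I^+(ν)`. -/
noncomputable def Iplus (a b c : ℕ) (nu : List ℕ) : Set (List ℕ × ℕ × ℕ) :=
  {p | IsPartitionOf (a + c + 1) p.1 ∧ IsDHl p.1 ∧
    p.2.1 ≤ (b - 1) / 2 ∧ p.2.2 ≤ (a + c + 1) / 2 ∧
    NN nu p.1 ((p.2.1 : ℤ) - 1) ((b : ℤ) - (p.2.1 : ℤ)) <
      NN nu p.1 (p.2.1 : ℤ) ((b : ℤ) - 1 - (p.2.1 : ℤ)) ∧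
    0 < Xi a p.1 p.2.2 c}

/-- The index set `I^-(ν)`. -/
noncomputable def Iminus (a b c : ℕ) (nu : List ℕ) : Set (List ℕ × ℕ × ℕ) :=
  {p | IsPartitionOf (b + c) p.1 ∧ IsDHl p.1 ∧
    p.2.1 ≤ a / 2 ∧ p.2.2 ≤ (b + c) / 2 ∧
    NN nu p.1 ((p.2.1 : ℤ) - 1) ((a : ℤ) - (p.2.1 : ℤ) + 1) <
      NN nu p.1 (p.2.1 : ℤ) ((a : ℤ) - (p.2.1 : ℤ)) ∧
    0 < Xi (b - 1) p.1 p.2.2 c}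

/-- The index set `J^+_d(ν)`. -/
noncomputable def Jplus (a b c d : ℕ) (nu : List ℕ) : Set (List ℕ × ℕ × ℕ) :=
  {p | p ∈ Iplus a b c nu ∧
    max ((a : ℤ) + (c : ℤ) + 1 - (p.2.2 : ℤ) + (p.2.1 : ℤ))
        ((p.2.2 : ℤ) + (b : ℤ) - 1 - (p.2.1 : ℤ)) ≤ (d : ℤ) ∧
    (d : ℤ) ≤ (a : ℤ) + (b : ℤ) + (c : ℤ) - (p.2.2 : ℤ) - (p.2.1 : ℤ)}

/-- The index set `J^-_d(ν)`. -/
noncomputable def Jminus (a b c d : ℕ) (nu : List ℕ) : Set (List ℕ × ℕ × ℕ) :=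
  {p | p ∈ Iminus a b c nu ∧
    max ((a : ℤ) - (p.2.1 : ℤ) + (p.2.2 : ℤ))
        ((p.2.1 : ℤ) + (b : ℤ) + (c : ℤ) - (p.2.2 : ℤ)) ≤ (d : ℤ) ∧
    (d : ℤ) ≤ (a : ℤ) + (b : ℤ) + (c : ℤ) - (p.2.1 : ℤ) - (p.2.2 : ℤ)}

/-- `triple^{(1)}_{(d,e) (a,b,1^c) ν}`. -/
noncomputable def triple1 (a b c d : ℕ) (nu : List ℕ) : ℚ :=
  ∑ᶠ p ∈ {p : List ℕ × ℕ × ℕ |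
      IsPartitionOf (a + c + 1) p.1 ∧ p.2.1 ≤ (b - 1) / 2 ∧ p.2.2 ≤ (a + c + 1) / 2},
    (ind (max ((a : ℤ) + (c : ℤ) + 1 - (p.2.2 : ℤ) + (p.2.1 : ℤ))
            ((p.2.2 : ℤ) + (b : ℤ) - 1 - (p.2.1 : ℤ)) ≤ (d : ℤ) ∧
          (d : ℤ) ≤ (a : ℤ) + (b : ℤ) + (c : ℤ) - (p.2.2 : ℤ) - (p.2.1 : ℤ)) : ℚ) *
      lrCoeff nu p.1 (twoRowP (b - 1 - p.2.1) p.2.1) *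
      kron (a + c + 1) (twoRowP (a + c + 1 - p.2.2) p.2.2) (hookP a (c + 1)) p.1

/-- `triple^{(2)}_{(d,e) (a,b,1^c) ν}`. -/
noncomputable def triple2 (a b c d : ℕ) (nu : List ℕ) : ℚ :=
  ∑ᶠ p ∈ {p : List ℕ × ℕ × ℕ |
      IsPartitionOf (b + c) p.1 ∧ p.2.1 ≤ a / 2 ∧ p.2.2 ≤ (b + c) / 2},
    (ind (max ((a : ℤ) - (p.2.1 : ℤ) + (p.2.2 : ℤ))
            ((p.2.1 : ℤ) + (b : ℤ) + (c : ℤ) - (p.2.2 : ℤ)) ≤ (d : ℤ) ∧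
          (d : ℤ) ≤ (a : ℤ) + (b : ℤ) + (c : ℤ) - (p.2.1 : ℤ) - (p.2.2 : ℤ)) : ℚ) *
      lrCoeff nu (twoRowP (a - p.2.1) p.2.1) p.1 *
      kron (b + c) (twoRowP (b + c - p.2.2) p.2.2) (hookP (b - 1) (c + 1)) p.1

/-- `triple^{(3)}_{(d,e) (a,b,1^c) ν}`. -/
noncomputable def triple3 (a b c d : ℕ) (nu : List ℕ) : ℚ :=
  ∑ᶠ p ∈ Jplus a b c d nu,
    lrCoeff nu p.1 (twoRowP (b - 1 - p.2.1) p.2.1) *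
      kron (a + c + 1) (twoRowP (a + c + 1 - p.2.2) p.2.2) (hookP a (c + 1)) p.1

/-- `triple^{(4)}_{(d,e) (a,b,1^c) ν}`. -/
noncomputable def triple4 (a b c d : ℕ) (nu : List ℕ) : ℚ :=
  ∑ᶠ p ∈ Jminus a b c d nu,
    lrCoeff nu (twoRowP (a - p.2.1) p.2.1) p.1 *
      kron (b + c) (twoRowP (b + c - p.2.2) p.2.2) (hookP (b - 1) (c + 1)) p.1

/-- The partition `ν = (a+2, 2^{S-1}, 1^{c+2-2S})`. -/
def nuSP (a S c : ℕ) : List ℕ :=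
  (a + 2) :: (List.replicate (S - 1) 2 ++ List.replicate (c + 2 - 2 * S) 1)

/-- The partition `δ* = (2^S, 1^{c+2-2S})`. -/
def deltaStarP (S c : ℕ) : List ℕ :=
  List.replicate S 2 ++ List.replicate (c + 2 - 2 * S) 1
/-! ### Blasiak's colored Yamanouchi tableaux.
Colored letters are coded by positive naturals: the barred letter `ī` is `2i - 1` and the
unbarred letter `i` is `2i`, so that the order on codes is the natural order
`1̄ < 1 < 2̄ < 2 < ⋯`, and a letter is barred iff its code is odd. -/

/-- The underlying (unbarred) value of a colored letter. -/
def letterVal (x : ℕ) : ℕ := (x + 1) / 2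

/-- Bumping condition for inserting `x` into a row: an unbarred letter displaces the first
entry strictly greater than it; a barred letter displaces the first entry weakly greater. -/
def rowBumpB (x y : ℕ) : Bool := if x % 2 = 1 then decide (x ≤ y) else decide (x < y)

/-- Bumping condition for inserting `x` into a column: an unbarred letter displaces the first
entry weakly greater than it; a barred letter displaces the first entry strictly greater. -/
def colBumpB (x y : ℕ) : Bool := if x % 2 = 1 then decide (x < y) else decide (x ≤ y)

/-- One pass of Haiman mixed insertion, with fuel.  `mixedIns fuel T true i x` inserts the
letter `x` into row `i` of the tableau `T` (a list of rows); `mixedIns fuel T false j x`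
inserts `x` into column `j`.  A bumped unbarred letter is inserted into the next row down,
and a bumped barred letter into the next column to the right. -/
def mixedIns : ℕ → List (List ℕ) → Bool → ℕ → ℕ → List (List ℕ)
  | 0, T, _, _, _ => T
  | fuel + 1, T, true, i, x =>
      if i < T.length then
        let row := T.getD i []
        match row.findIdx? (fun y => rowBumpB x y) with
        | none => T.set i (row ++ [x])
        | some p =>
            let y := row.getD p 0
            let T' := T.set i (row.set p x)
            if y % 2 = 1 then mixedIns fuel T' false (p + 1) y
            else mixedIns fuel T' true (i + 1) y
      else T ++ [[x]]
  | fuel + 1, T, false, j, x =>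
      match (List.range T.length).find? (fun i =>
          decide ((T.getD i []).length ≤ j) || colBumpB x ((T.getD i []).getD j 0)) with
      | none => T ++ [[x]]
      | some i =>
          let row := T.getD i []
          if row.length ≤ j then T.set i (row ++ [x])
          else
            let y := row.getD j 0
            let T' := T.set i (row.set j x)
            if y % 2 = 1 then mixedIns fuel T' false (j + 1) y
            else mixedIns fuel T' true (i + 1) y

/-- Mixed insertion of the colored letter `x` into the colored tableau `T`: unbarred letters
are inserted into the first row, barred letters into the first column. -/
def mixedInsert (T : List (List ℕ)) (x : ℕ) : List (List ℕ) :=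
  mixedIns (((T.map List.length).sum + x + 4) ^ 2) T (decide (x % 2 = 0)) 0 x

/-- The mixed insertion tableau `P(w)` of a colored word `w`. -/
def Pw (w : List ℕ) : List (List ℕ) := w.foldl mixedInsert []

/-- A colored word: all letter codes are positive. -/
def ValidWord (w : List ℕ) : Prop := ∀ x ∈ w, 0 < x

/-- The total color `tc(w)`: the number of barred letters. -/
def totalColor (w : List ℕ) : ℕ := (w.filter fun x => x % 2 = 1).length

/-- `w^{blft}`: move the barred letters to the front (preserving relative order) and
erase the bars. -/
def blft (w : List ℕ) : List ℕ :=
  ((w.filter fun x => x % 2 = 1) ++ (w.filter fun x => x % 2 = 0)).map letterVal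

/-- The colored word `w` has (unbarred) content `λ`: for each `i`, the number of
occurrences of `i+1` and of `(i+1)‾` together is `λ_{i+1}`. -/
def HasContent (w : List ℕ) (lam : List ℕ) : Prop :=
  ∀ i : ℕ, (w.filter fun x => letterVal x = i + 1).length = lam.getD i 0

/-- An ordinary word (of positive integers) is Yamanouchi if the content of each of its
suffixes is a partition. -/
def IsYamanouchi (w : List ℕ) : Prop :=
  ∀ k i : ℕ, ((w.drop k).filter fun x => x = i + 2).length ≤
    ((w.drop k).filter fun x => x = i + 1).length

/-- The set `CYT_{λ, d}` of colored Yamanouchi tableaux. -/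
def CYT (lam : List ℕ) (dcol : ℕ) : Set (List (List ℕ)) :=
  {T | ∃ w : List ℕ, ValidWord w ∧ HasContent w lam ∧ totalColor w = dcol ∧
    IsYamanouchi (blft w) ∧ Pw w = T}

/-- The shape of a tableau. -/
def shapeOf (T : List (List ℕ)) : List ℕ := T.map List.length

/-- The southwest-most entry of `T` (first entry of the last row) is unbarred. -/
def swUnbarred (T : List (List ℕ)) : Prop := (T.getLastD []).headD 0 % 2 = 0

/-- The set `ℬ_{λ (n-d, 1^d) ν}` of Blasiak tableaux: colored Yamanouchi tableaux in
`CYT_{λ, d}` of shape `ν` whose southwest-most entry is unbarred.  By Blasiak's theorem its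
cardinality is the Kronecker coefficient `g_{λ (n-d, 1^d) ν}`. -/
def BlasiakSet (lam : List ℕ) (dcol : ℕ) (nu : List ℕ) : Set (List (List ℕ)) :=
  {T | T ∈ CYT lam dcol ∧ shapeOf T = nu ∧ swUnbarred T}

/-!
A triple `(δ, i, r) ∈ J⁻_d(ν)` has `𝒩_{ν δ i (a-i)} > 0`, so `δ ⊆ ν` and `δ = (x, 2^p, 1^q)`.
For such `δ`, Rosas's `Ξ^{[1]}_δ(r, c)` vanishes unless `δ` is a column or `x = 2` and
`r = p + 1`; containment in `ν` then forces `δ = δ* = (2^S, 1^{c+2-2S})` and `r = S`. Since `ν`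
and `δ*` differ only in their first row, `𝒩_{ν δ* s (a-s)} = 1` for all `0 ≤ s ≤ a`, so the strict
inequality defining `I⁻(ν)` forces `i = 0`. For `(δ*, 0, S)` the window for `d` is exactly
`max(a + S, c + 2 - S) ≤ d ≤ a + c + 2 - S`.
-/

def twosOnes (p q : ℕ) : List ℕ := List.replicate p 2 ++ List.replicate q 1

section TwosOnes

variable {p q : ℕ}

@[simp] lemma length_twosOnes : (twosOnes p q).length = p + q := by simp [twosOnes]

@[simp] lemma sum_twosOnes : (twosOnes p q).sum = 2 * p + q := by
  simp [twosOnes, List.sum_replicate]; ring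

lemma getD_twosOnes (j : ℕ) :
    (twosOnes p q).getD j 0 = if j < p then 2 else if j < p + q then 1 else 0 := by
  simp only [twosOnes, List.getD_eq_getElem?_getD, List.getElem?_append, List.getElem?_replicate,
    List.length_replicate]
  split_ifs <;> first | omega | rfl

lemma mem_twosOnes {x : ℕ} (hx : x ∈ twosOnes p q) : x = 2 ∨ x = 1 := by
  simp only [twosOnes, List.mem_append, List.mem_replicate] at hx
  omega

lemma two_mem_twosOnes (hp : 0 < p) : 2 ∈ twosOnes p q := by
  simp [twosOnes]; omega

lemma pairwise_twosOnes : (twosOnes p q).Pairwise (· ≥ ·) := by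
  simp [twosOnes, List.pairwise_append, List.pairwise_replicate]

lemma exists_eq_twosOnes : ∀ {l : List ℕ}, l.Pairwise (· ≥ ·) → (∀ x ∈ l, 0 < x) →
    (∀ x ∈ l, x ≤ 2) → ∃ p q, l = twosOnes p q
  | [], _, _, _ => ⟨0, 0, rfl⟩
  | y :: t, hs, hpos, hle => by
    rw [List.pairwise_cons] at hs
    obtain ⟨p, q, rfl⟩ := exists_eq_twosOnes hs.2 (fun x hx => hpos x (by simp [hx]))
      (fun x hx => hle x (by simp [hx]))
    have hy := hpos y (by simp)
    have hy2 := hle y (by simp)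
    obtain rfl | rfl : y = 1 ∨ y = 2 := by omega
    · have hp : p = 0 := Nat.eq_zero_of_not_pos fun hp => by
        have := hs.1 2 (two_mem_twosOnes hp)
        omega
      exact ⟨0, q + 1, by simp [twosOnes, hp, List.replicate_succ]⟩
    · exact ⟨p + 1, q, by simp [twosOnes, List.replicate_succ]⟩

lemma le_of_subP_twosOnes {p' q' : ℕ} (h : SubP (twosOnes p q) (twosOnes p' q')) :
    p ≤ p' ∧ p + q ≤ p' + q' := by
  have h₁ := h (p - 1)
  have h₂ := h (p + q - 1)
  simp only [getD_twosOnes] at h₁ h₂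
  constructor
  · split_ifs at h₁ <;> omega
  · split_ifs at h₂ <;> omega

end TwosOnes

section Diagrams

lemma List.getD_succ_le_of_pairwise {l : List ℕ} (hs : l.Pairwise (· ≥ ·)) (j : ℕ) :
    l.getD (j + 1) 0 ≤ l.getD j 0 := by
  rcases lt_or_ge (j + 1) l.length with h | h
  · rw [List.getD_eq_getElem _ _ h, List.getD_eq_getElem _ _ (by omega)]
    exact List.pairwise_iff_getElem.mp hs j (j + 1) _ _ (by omega)
  · rw [List.getD_eq_default _ _ h]
    exact Nat.zero_le _

lemma subP_cons_cons {x y : ℕ} {t u : List ℕ} : SubP (x :: t) (y :: u) ↔ x ≤ y ∧ SubP t u :=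
  ⟨fun h => ⟨h 0, fun j => h (j + 1)⟩, fun ⟨hxy, h⟩ j => by cases j with
    | zero => exact hxy
    | succ j => exact h j⟩

lemma SubP.trans {l₁ l₂ l₃ : List ℕ} (h₁ : SubP l₁ l₂) (h₂ : SubP l₂ l₃) : SubP l₁ l₃ :=
  fun j => (h₁ j).trans (h₂ j)

lemma SubP.antisymm : ∀ {l₁ l₂ : List ℕ}, SubP l₁ l₂ → SubP l₂ l₁ → (∀ x ∈ l₁, 0 < x) →
    (∀ x ∈ l₂, 0 < x) → l₁ = l₂
  | [], [], _, _, _, _ => rfl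
  | [], y :: _, _, h₂, _, hpos₂ => absurd (h₂ 0) (by simpa using (hpos₂ y (by simp)).ne')
  | x :: _, [], h₁, _, hpos₁, _ => absurd (h₁ 0) (by simpa using (hpos₁ x (by simp)).ne')
  | x :: t, y :: u, h₁, h₂, hpos₁, hpos₂ => by
    rw [subP_cons_cons] at h₁ h₂
    rw [le_antisymm h₁.1 h₂.1, SubP.antisymm h₁.2 h₂.2 (fun z hz => hpos₁ z (by simp [hz]))
      (fun z hz => hpos₂ z (by simp [hz]))]

lemma hStrip_cons_add {y : ℕ} {T : List ℕ} (hs : (y :: T).Pairwise (· ≥ ·)) (s : ℕ) :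
    HStrip (y :: T) ((y + s) :: T) := by
  refine ⟨subP_cons_cons.mpr ⟨by omega, fun _ => le_rfl⟩, fun i => ?_⟩
  simpa using List.getD_succ_le_of_pairwise hs i

lemma NN_cons_add_cons {y m s : ℕ} {T : List ℕ} (hs : (y :: T).Pairwise (· ≥ ·))
    (hpos : ∀ x ∈ y :: T, 0 < x) (hsm : s ≤ m) :
    NN ((y + m) :: T) (y :: T) (s : ℤ) ((m : ℤ) - s) = 1 := by
  have key : ∀ κ : List ℕ, IsPartition κ ∧ HStrip (y :: T) κ ∧ HStrip κ ((y + m) :: T) ∧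
      (κ.sum : ℤ) = ((y :: T).sum : ℤ) + s ∧ (((y + m) :: T).sum : ℤ) = κ.sum + ((m : ℤ) - s) →
      κ = (y + s) :: T := by
    rintro (_ | ⟨z, u⟩) ⟨hκ, ⟨hlo, -⟩, ⟨hhi, -⟩, hsum, -⟩
    · simpa using (hpos y (by simp)).trans_le (hlo 0)
    · rw [subP_cons_cons] at hlo hhi
      have hu : u = T := hhi.2.antisymm hlo.2 (fun x hx => hκ.2 x (by simp [hx]))
        (fun x hx => hpos x (by simp [hx]))
      subst hu
      simp only [List.sum_cons, Nat.cast_add] at hsum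
      rw [show z = y + s by omega]
  have hs' : ((y + s) :: T).Pairwise (· ≥ ·) := by
    rw [List.pairwise_cons] at hs ⊢
    exact ⟨fun x hx => (hs.1 x hx).trans (by omega), hs.2⟩
  rw [NN, if_neg (by omega), Nat.card_eq_one_iff_unique]
  refine ⟨⟨fun κ₁ κ₂ => Subtype.ext ((key _ κ₁.2).trans (key _ κ₂.2).symm)⟩,
    ⟨⟨(y + s) :: T, ⟨hs', fun x hx => ?_⟩, hStrip_cons_add hs s, ?_, ?_, ?_⟩⟩⟩
  · rcases List.mem_cons.mp hx with rfl | hx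
    · have := hpos y (by simp); omega
    · exact hpos x (by simp [hx])
  · simpa [show y + m = y + s + (m - s) by omega] using hStrip_cons_add hs' (m - s)
  · push_cast [List.sum_cons]; ring
  · push_cast [List.sum_cons]; omega

lemma NN_pos {ν η : List ℕ} {s t : ℤ} (h : 0 < NN ν η s t) : 0 ≤ s ∧ 0 ≤ t ∧ SubP η ν := by
  unfold NN at h
  split_ifs at h with hst
  · exact absurd h (lt_irrefl 0)
  · obtain ⟨⟨κ, -, ⟨hlo, -⟩, ⟨hhi, -⟩, -⟩⟩ := (Nat.card_pos_iff.mp h).1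
    exact ⟨by omega, by omega, hlo.trans hhi⟩

end Diagrams

section Rosas

lemma ind_mul_ind (P Q : Prop) : ind P * ind Q = ind (P ∧ Q) := by
  unfold ind; split_ifs <;> simp_all

lemma ind_pos {P : Prop} (h : 0 < ind P) : P := by
  unfold ind at h; split_ifs at h <;> tauto

lemma or_of_ind_add_ind_pos {P Q : Prop} (h : 0 < ind P + ind Q) : P ∨ Q := by
  unfold ind at h; split_ifs at h <;> tauto

lemma or_of_ind_add_ind_add_ind_sub_ind_pos {P Q R D : Prop}
    (h : 0 < ind P + ind Q + ind R - ind D) : P ∨ Q ∨ R := by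
  unfold ind at h; split_ifs at h <;> tauto

lemma Phi_pos {n3 n4 d1 d2 e r : ℤ} (h : 0 < Phi n3 n4 d1 d2 e r) :
    (n3 ≤ r - d2 - 1 ∧ r - d2 - 1 ≤ n4 ∧ d1 + 2 * d2 < e ∧ e < d1 + 2 * d2 + 3) ∨
    (n3 ≤ r - d2 ∧ r - d2 ≤ n4 ∧ d1 + 2 * d2 ≤ e ∧ e ≤ d1 + 2 * d2 + 3) ∨
    (n3 ≤ r - d2 + 1 ∧ r - d2 + 1 ≤ n4 ∧ d1 + 2 * d2 < e ∧ e < d1 + 2 * d2 + 3) :=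
  or_of_ind_add_ind_add_ind_sub_ind_pos (by simpa only [Phi, ind_mul_ind, and_assoc] using h)

lemma Psi_pos {c r t N : ℤ} (h : 0 < Psi c r t N) :
    (r - 1 ≤ c + 1 ∧ c + 1 ≤ N - r ∧ c + 1 = t) ∨
    (2 * r ≤ c + t + 2 ∧ c + t + 2 ≤ 2 * (N - r) ∧ |c + 1 - t| ≤ 1) := by
  rcases or_of_ind_add_ind_pos (by simpa only [Psi, ind_mul_ind] using h) with
    ⟨⟨h₁, h₂⟩, h₃⟩ | ⟨⟨h₁, h₂⟩, h₃⟩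
  · exact Or.inl ⟨h₁, h₂, h₃⟩
  · refine Or.inr ⟨?_, ?_, h₃⟩
    · have : (2 * r : ℚ) ≤ c + t + 2 := by linarith
      exact_mod_cast this
    · have : (c + t + 2 : ℚ) ≤ 2 * (N - r) := by linarith
      exact_mod_cast this

end Rosas

section XiOne

variable {x p q r c : ℕ}

lemma eq_one_of_cons_twosOnes_eq_replicate {n : ℕ} (h : x :: twosOnes p q = List.replicate n 1) :
    x = 1 ∧ p = 0 := by
  have hall := (List.eq_replicate_iff.mp h).2
  refine ⟨hall x (by simp), Nat.eq_zero_of_not_pos fun hp => ?_⟩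
  simpa using hall 2 (List.mem_cons_of_mem _ (two_mem_twosOnes hp))

lemma Phi_pos_cons_twosOnes (hsum : x + 2 * (p + 1) + q = c + 2) (hx : 2 ≤ x)
    (h : 0 < Phi (n3P (x :: twosOnes (p + 1) q)) (n4P (x :: twosOnes (p + 1) q))
      (d1P (x :: twosOnes (p + 1) q)) (d2P (x :: twosOnes (p + 1) q))
      (eP 1 c (x :: twosOnes (p + 1) q)) r) :
    x = 2 ∧ r = p + 2 := by
  have htail : tailP (x :: twosOnes (p + 1) q) = twosOnes p q := rfl
  have hu : uP (x :: twosOnes (p + 1) q) = p := by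
    rw [uP, htail]; simp [twosOnes, List.count_replicate]
  have hv : vP (x :: twosOnes (p + 1) q) = q := by
    rw [vP, htail]; simp [twosOnes, List.count_replicate]
  have h₁ : (x :: twosOnes (p + 1) q).getD 1 0 = 2 := by
    rw [List.getD_cons_succ, getD_twosOnes]; simp
  simp only [n3P, n4P, d1P, d2P, eP, hu, hv, h₁, List.getD_cons_zero, List.length_cons,
    length_twosOnes] at h
  split_ifs at h <;> rcases Phi_pos h with h | h | h <;> push_cast at h <;> omega

lemma Xi_one_pos_cons_twosOnes (hsum : x + 2 * p + q = c + 2) (hxp : 0 < p → 2 ≤ x)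
    (h : 0 < Xi 1 (x :: twosOnes p q) r c) : (x = 1 ∧ p = 0) ∨ (x = 2 ∧ r = p + 1) := by
  have hδsum : (x :: twosOnes p q).sum = c + 2 := by simp; omega
  rw [Xi] at h
  split_ifs at h with hr hrow hcol hhook hdh
  · exact Or.inl (eq_one_of_cons_twosOnes_eq_replicate
      (ind_pos h : x :: twosOnes p q = List.replicate (c + 2) 1))
  · rw [ind_mul_ind] at h
    obtain ⟨hc, hr1⟩ := ind_pos h
    have hpq : twosOnes p q = [] := (List.cons.inj hrow).2
    simp only [twosOnes, List.append_eq_nil_iff, List.replicate_eq_nil_iff] at hpq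
    omega
  · exact Or.inl (eq_one_of_cons_twosOnes_eq_replicate hcol)
  · obtain ⟨hx, -, hform⟩ := hhook
    simp only [List.getD_cons_zero, List.length_cons, length_twosOnes] at hx hform
    obtain ⟨-, rfl⟩ := eq_one_of_cons_twosOnes_eq_replicate
      (show 1 :: twosOnes p q = List.replicate (p + q + 1) 1 by
        rw [List.replicate_succ]; exact congrArg _ (List.cons.inj hform).2)
    rw [hδsum] at h
    simp only [List.length_cons, length_twosOnes] at h
    rcases Psi_pos h with h | ⟨h₁, h₂, h₃⟩
    · push_cast at h; omega
    · rw [abs_le] at h₃; push_cast at h₁ h₂ h₃; omega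
  · obtain ⟨-, -, h₂⟩ := hdh
    rw [List.getD_cons_succ, getD_twosOnes] at h₂
    obtain ⟨p, rfl⟩ : ∃ p', p = p' + 1 := Nat.exists_eq_add_one.mpr (by split_ifs at h₂ <;> omega)
    exact Or.inr (by have := Phi_pos_cons_twosOnes hsum (hxp (by omega)) h; omega)
  · exact absurd h (lt_irrefl 0)

end XiOne

lemma exists_cons_twosOnes_of_subP {δ : List ℕ} {y k l : ℕ} (hδ : IsPartition δ) (hne : δ ≠ [])
    (hsub : SubP δ (y :: twosOnes k l)) :
    ∃ x p q, δ = x :: twosOnes p q ∧ (0 < p → 2 ≤ x) ∧ p ≤ k ∧ p + q ≤ k + l := by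
  obtain ⟨x, t, rfl⟩ := List.exists_cons_of_ne_nil hne
  obtain ⟨hs, hpos⟩ := hδ
  rw [List.pairwise_cons] at hs
  have htsub := (subP_cons_cons.mp hsub).2
  have hle : ∀ z ∈ t, z ≤ 2 := by
    intro z hz
    obtain ⟨j, hj, rfl⟩ := List.getElem_of_mem hz
    have := htsub j
    rw [List.getD_eq_getElem _ _ hj, getD_twosOnes] at this
    split_ifs at this <;> omega
  obtain ⟨p, q, rfl⟩ := exists_eq_twosOnes hs.2 (fun z hz => hpos z (by simp [hz])) hle
  exact ⟨x, p, q, rfl, fun hp => hs.1 2 (two_mem_twosOnes hp), le_of_subP_twosOnes htsub⟩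

section DeltaStar

variable {a S c : ℕ}

lemma nuSP_eq_cons : nuSP a S c = (2 + a) :: twosOnes (S - 1) (c + 2 - 2 * S) := by
  rw [nuSP, add_comm, twosOnes]

lemma deltaStarP_eq_cons (hS : 1 ≤ S) : deltaStarP S c = 2 :: twosOnes (S - 1) (c + 2 - 2 * S) := by
  obtain ⟨S, rfl⟩ := Nat.exists_eq_add_of_le' hS
  simp [deltaStarP, twosOnes, List.replicate_succ]

lemma eq_deltaStarP_of_Xi_pos {r : ℕ} {δ : List ℕ} (hS1 : 1 ≤ S) (hS2 : 2 * S ≤ c + 2)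
    (hδ : IsPartitionOf (c + 2) δ) (hsub : SubP δ (nuSP a S c)) (hXi : 0 < Xi 1 δ r c) :
    δ = deltaStarP S c ∧ r = S := by
  have hne : δ ≠ [] := by rintro rfl; simp [IsPartitionOf] at hδ
  rw [nuSP_eq_cons] at hsub
  obtain ⟨x, p, q, rfl, hxp, hpk, hpql⟩ := exists_cons_twosOnes_of_subP hδ.1 hne hsub
  have hsum : x + 2 * p + q = c + 2 := by simpa [add_assoc] using hδ.2
  rcases Xi_one_pos_cons_twosOnes hsum hxp hXi with ⟨rfl, rfl⟩ | ⟨rfl, rfl⟩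
  · omega
  · rw [deltaStarP_eq_cons hS1, show p = S - 1 by omega, show q = c + 2 - 2 * S by omega]
    exact ⟨rfl, by omega⟩

lemma NN_nuSP_deltaStarP {s : ℕ} (hS : 1 ≤ S) (hs : s ≤ a) :
    NN (nuSP a S c) (deltaStarP S c) s ((a : ℤ) - s) = 1 := by
  rw [nuSP_eq_cons, deltaStarP_eq_cons hS]
  refine NN_cons_add_cons ?_ ?_ hs
  · exact List.pairwise_cons.mpr ⟨fun z hz => by rcases mem_twosOnes hz with rfl | rfl <;> omega,
      pairwise_twosOnes⟩
  · intro z hz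
    rcases List.mem_cons.mp hz with rfl | hz
    · omega
    · rcases mem_twosOnes hz with rfl | rfl <;> omega

end DeltaStar

theorem Jminus_empty_general (a c d S : ℕ) (hS1 : 1 ≤ S) (hS2 : S ≤ (c + 2) / 2)
    (hd : d < max (a + S) (c + 2 - S) ∨ a + c + 2 - S < d) :
    Jminus a 2 c d (nuSP a S c) = (∅ : Set (List ℕ × ℕ × ℕ)) ∧
    triple4 a 2 c d (nuSP a S c) = 0 := by
  have hJ : Jminus a 2 c d (nuSP a S c) = ∅ := by
    refine Set.eq_empty_of_forall_notMem ?_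
    rintro ⟨δ, i, r⟩ ⟨⟨hδ, -, -, -, hNN, hXi⟩, hlo, hhi⟩
    dsimp only at hδ hNN hXi hlo hhi
    obtain ⟨-, hia, hsub⟩ := NN_pos ((Nat.zero_le _).trans_lt hNN)
    obtain ⟨rfl, rfl⟩ :=
      eq_deltaStarP_of_Xi_pos hS1 (by omega) (by rwa [add_comm c]) hsub hXi
    have hi : i = 0 := by
      by_contra hi
      have h₀ := NN_nuSP_deltaStarP (a := a) (c := c) (s := i - 1) hS1 (by omega)
      rw [Nat.cast_sub (by omega), Nat.cast_one, sub_sub_eq_add_sub, add_sub_right_comm] at h₀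
      rw [h₀, NN_nuSP_deltaStarP (s := i) hS1 (by omega)] at hNN
      exact lt_irrefl 1 hNN
    subst hi
    simp only [max_le_iff] at hlo
    omega
  exact ⟨hJ, by rw [triple4, hJ, finsum_mem_empty]⟩

/-- Lemma `nulllemma`: with `a ≥ 2`, `b = 2`, `c ≥ 1`,
`a + 2 + c = d + e = n`, `d ≥ e`, `1 ≤ S ≤ ⌊(c+2)/2⌋` and `ν = (a+2, 2^{S-1}, 1^{c+2-2S})`:
if `d < max(a + S, c + 2 - S)` or `d > a + c + 2 - S`, then `J^-_d(ν) = ∅` and consequently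
`triple^{(4)}_{(d,e) (a,2,1^c) ν} = 0`. -/
theorem Jminus_empty (a c d e S n : ℕ) (ha : 2 ≤ a) (hc : 1 ≤ c)
    (h1 : a + 2 + c = n) (h2 : d + e = n) (hde : e ≤ d)
    (hS1 : 1 ≤ S) (hS2 : S ≤ (c + 2) / 2)
    (hd : d < max (a + S) (c + 2 - S) ∨ a + c + 2 - S < d) :
    Jminus a 2 c d (nuSP a S c) = (∅ : Set (List ℕ × ℕ × ℕ)) ∧
    triple4 a 2 c d (nuSP a S c) = 0 :=
  Jminus_empty_general a c d S hS1 hS2 hd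
end
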